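/- Let (A(n)) be an i.i.d. sequence of random d×d max-plus matrices with no line of -∞, admitting a block decomposition A(n) = [[B(n), D(n)],[-∞, C(n)]] with respect to a partition (I,J), such that the incidence graph of B is strongly connected and P(D(1) = -∞ identically) < 1. Then for every i ∈ I, the event {for all n ∈ ℕ, (B(1)⋯B(n)D(n+1)·0)_i = -∞} has probability zero. -/

import Mathlib

open Filter MeasureTheory Topology
noncomputable section

/-- The max-plus semiring ℝ ∪ {-∞}, modelled as `WithBot ℝ`:
`⊥` is `-∞`, addition is the semiring multiplication, `Finset.sup` the semiring addition. -/
abbrev MP := WithBot ℝ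

/-- Embedding of ℝ ∪ {-∞} into the extended reals. -/
def toE (x : MP) : EReal := WithBot.recBotCoe ⊥ (fun r : ℝ => (r : EReal)) x

instance : MeasurableSpace MP := MeasurableSpace.comap toE inferInstance

instance {d : ℕ} : MeasurableSpace (Matrix (Fin d) (Fin d) MP) :=
  inferInstanceAs (MeasurableSpace (Fin d → Fin d → MP))

/-- Max-plus matrix multiplication: `(AB)_{ij} = max_k (A_{ik} + B_{kj})`. -/
def mpMul {d : ℕ} (A B : Matrix (Fin d) (Fin d) MP) : Matrix (Fin d) (Fin d) MP :=
  fun i j => Finset.univ.sup fun k => A i k + B k j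

/-- Max-plus identity matrix. -/
def mpId (d : ℕ) : Matrix (Fin d) (Fin d) MP :=
  fun i j => if i = j then (0 : MP) else ⊥

/-- Max-plus action of a matrix on an MP vector: `(Ax)_i = max_j (A_{ij} + x_j)`. -/
def mpAct {d : ℕ} (A : Matrix (Fin d) (Fin d) MP) (x : Fin d → MP) : Fin d → MP :=
  fun i => Finset.univ.sup fun j => A i j + x j

/-- `A^n = A(n-1) ⋯ A(0)` (max-plus product). -/
def mpProdFwd {d : ℕ} (A : ℕ → Matrix (Fin d) (Fin d) MP) : ℕ → Matrix (Fin d) (Fin d) MP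
  | 0 => mpId d
  | n + 1 => mpMul (A n) (mpProdFwd A n)

/-- `A(-1) A(-2) ⋯ A(-n)`, for a two-sided sequence (max-plus product). -/
def mpProdNeg {d : ℕ} (A : ℤ → Matrix (Fin d) (Fin d) MP) : ℕ → Matrix (Fin d) (Fin d) MP
  | 0 => mpId d
  | n + 1 => mpMul (mpProdNeg A n) (A (-(n + 1 : ℕ)))

/-- A matrix has no line (row) entirely equal to -∞. -/
def noBotLine {d : ℕ} (A : Matrix (Fin d) (Fin d) MP) : Prop := ∀ i, ∃ j, A i j ≠ ⊥

/-- The positive part `x⁺ = max(x,0)` of an element of ℝ ∪ {-∞}, as a real number. -/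
def mpPlus (x : MP) : ℝ := max (x.unbotD 0) 0

/-- `x_i(n,0) = max_j (A(n-1)⋯A(0))_{ij}`, i.e. `x(n,0) = A(n-1)⋯A(0)·0`. -/
def xvec {d : ℕ} (A : ℕ → Matrix (Fin d) (Fin d) MP) (n : ℕ) (i : Fin d) : MP :=
  Finset.univ.sup fun j => mpProdFwd A n i j

/-- `y_i(n,0) = max_j (A(-1)⋯A(-n))_{ij}`, i.e. `y(n,0) = A(-1)⋯A(-n)·0`. -/
def yvec {d : ℕ} (A : ℤ → Matrix (Fin d) (Fin d) MP) (n : ℕ) (i : Fin d) : MP :=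
  Finset.univ.sup fun j => mpProdNeg A n i j

/-- Bilateral iteration `θ^n` (n ∈ ℤ) of a map `θ` with inverse `θi`. -/
def zIter {Ω : Type*} (θ θi : Ω → Ω) (n : ℤ) (ω : Ω) : Ω :=
  if 0 ≤ n then θ^[n.toNat] ω else θi^[(-n).toNat] ω

/-- The submatrix supported on a subset `S` of indices, filled with -∞ elsewhere. -/
def mpRestrict {d : ℕ} (S : Finset (Fin d)) (A : Matrix (Fin d) (Fin d) MP) :
    Matrix (Fin d) (Fin d) MP :=
  fun i j => if i ∈ S ∧ j ∈ S then A i j else ⊥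

/-- `B(1) B(2) ⋯ B(n)` where `B(k)` is the block of `A(k)` indexed by `I`. -/
def prodB {d : ℕ} (A : ℕ → Matrix (Fin d) (Fin d) MP) (I : Finset (Fin d)) :
    ℕ → Matrix (Fin d) (Fin d) MP
  | 0 => mpId d
  | n + 1 => mpMul (prodB A I n) (mpRestrict I (A (n + 1)))

/-!
Row `i` of `B(1)⋯B(N)` always keeps a finite entry `u ∈ I`: lines of `A` are never all `-∞`,
and on the event in question no finite entry may leave `I` through `D`. By strong connectivity
and `P(D(1) ≢ -∞) > 0`, from every `u ∈ I` some fixed path of edges of positive probability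
leads out of `I`; cut time into blocks long enough for all these paths. At the start of each
block pick a surviving entry `u` (a function of the past); the path from `u` is open during the
block with probability at least `q > 0`, independently of the past, and if it is open the event
fails. Hence the event has probability at most `(1 - q) ^ m` for every `m`.
-/

open ProbabilityTheory
open scoped ENNReal

section MaxPlus

variable {d : ℕ}

lemma mpMul_ne_bot_iff {A B : Matrix (Fin d) (Fin d) MP} {i j : Fin d} :
    mpMul A B i j ≠ ⊥ ↔ ∃ k, A i k ≠ ⊥ ∧ B k j ≠ ⊥ := by
  simp [mpMul, Finset.sup_eq_bot_iff, WithBot.add_eq_bot, not_or]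

lemma prodB_succ_ne_bot_iff {B : ℕ → Matrix (Fin d) (Fin d) MP} {I : Finset (Fin d)} {n : ℕ}
    {i j : Fin d} :
    prodB B I (n + 1) i j ≠ ⊥ ↔ ∃ k, prodB B I n i k ≠ ⊥ ∧ k ∈ I ∧ j ∈ I ∧ B (n + 1) k j ≠ ⊥ := by
  simp only [prodB, mpMul_ne_bot_iff, mpRestrict]
  refine exists_congr fun k => ?_
  by_cases h : k ∈ I ∧ j ∈ I <;> simp [h]; tauto

def mpSupport (M : Matrix (Fin d) (Fin d) MP) : Fin d → Fin d → Bool :=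
  fun u v => decide (M u v ≠ ⊥)

lemma mpSupport_prodB_succ (B : ℕ → Matrix (Fin d) (Fin d) MP) (I : Finset (Fin d)) (n : ℕ) :
    mpSupport (prodB B I (n + 1)) = fun u v =>
      decide (∃ k, mpSupport (prodB B I n) u k ∧ k ∈ I ∧ v ∈ I ∧ mpSupport (B (n + 1)) k v) := by
  ext u v
  simp [mpSupport, prodB_succ_ne_bot_iff]

lemma exists_prodB_ne_bot {B : ℕ → Matrix (Fin d) (Fin d) MP} {I : Finset (Fin d)} {i : Fin d}
    (hi : i ∈ I) (hline : ∀ n, noBotLine (B n))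
    (hE : ∀ n, ∀ j ∉ I, mpMul (prodB B I n) (B (n + 1)) i j = ⊥) (n : ℕ) :
    ∃ u ∈ I, prodB B I n i u ≠ ⊥ := by
  induction n with
  | zero => exact ⟨i, hi, by simp [prodB, mpId]⟩
  | succ n ih =>
    obtain ⟨u, hu, hiu⟩ := ih
    obtain ⟨w, hw⟩ := hline (n + 1) u
    by_cases hwI : w ∈ I
    · exact ⟨w, hwI, prodB_succ_ne_bot_iff.2 ⟨u, hiu, hu, hwI, hw⟩⟩
    · exact absurd (hE n w hwI) (mpMul_ne_bot_iff.2 ⟨u, hiu, hw⟩)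

lemma exists_mpMul_prodB_ne_bot_of_path {B : ℕ → Matrix (Fin d) (Fin d) MP} {I : Finset (Fin d)}
    {i u : Fin d} {N n : ℕ} {f : ℕ → Fin d} (hu : u ∈ I) (hN : prodB B I N i u ≠ ⊥)
    (hf0 : f 0 = u) (hfn : f n ∉ I) (hopen : ∀ t < n, B (N + t + 1) (f t) (f (t + 1)) ≠ ⊥) :
    ∃ k, ∃ j ∉ I, mpMul (prodB B I k) (B (k + 1)) i j ≠ ⊥ := by
  subst hf0
  induction n generalizing N f with
  | zero => exact absurd hu hfn
  | succ n ih =>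
    by_cases hf1 : f 1 ∈ I
    · refine ih (f := fun t => f (t + 1)) hfn (fun t ht => ?_) hf1
        (prodB_succ_ne_bot_iff.2 ⟨f 0, hN, hu, hf1, by simpa using hopen 0 (by omega)⟩)
      simpa [show N + (t + 1) + 1 = N + 1 + t + 1 by omega] using hopen (t + 1) (by omega)
    · exact ⟨N, f 1, hf1, mpMul_ne_bot_iff.2 ⟨f 0, hN, by simpa using hopen 0 (by omega)⟩⟩

end MaxPlus

lemma Relation.ReflTransGen.exists_path {α : Type*} {r : α → α → Prop} {a b : α}
    (h : Relation.ReflTransGen r a b) :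
    ∃ (n : ℕ) (f : ℕ → α), f 0 = a ∧ f n = b ∧ ∀ t < n, r (f t) (f (t + 1)) := by
  induction h using Relation.ReflTransGen.head_induction_on with
  | refl => exact ⟨0, fun _ => b, rfl, rfl, by omega⟩
  | head hac _ ih =>
    obtain ⟨n, f, hf0, hfn, hf⟩ := ih
    refine ⟨n + 1, fun | 0 => _ | t + 1 => f t, rfl, hfn, fun t ht => ?_⟩
    cases t with
    | zero => simpa [hf0] using hac
    | succ t => exact hf t (by omega)

section Measurability

variable {Ω β : Type*} [MeasurableSpace β]

abbrev sigmaOf (A : ℕ → Ω → β) (S : Set ℕ) : MeasurableSpace Ω :=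
  ⨆ k ∈ S, MeasurableSpace.comap (A k) inferInstance

lemma comap_le_sigmaOf (A : ℕ → Ω → β) {S : Set ℕ} {k : ℕ} (hk : k ∈ S) :
    MeasurableSpace.comap (A k) inferInstance ≤ sigmaOf A S :=
  le_iSup₂ (f := fun k (_ : k ∈ S) => MeasurableSpace.comap (A k) inferInstance) k hk

lemma sigmaOf_mono (A : ℕ → Ω → β) {S T : Set ℕ} (h : S ⊆ T) : sigmaOf A S ≤ sigmaOf A T :=
  biSup_mono h

lemma sigmaOf_le [m0 : MeasurableSpace Ω] {A : ℕ → Ω → β} (hA : ∀ k, Measurable (A k))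
    (S : Set ℕ) : sigmaOf A S ≤ m0 :=
  iSup₂_le fun k _ => (hA k).comap_le

lemma measurableSet_ne_bot : MeasurableSet {x : MP | x ≠ ⊥} :=
  ⟨{⊥}ᶜ, (measurableSet_singleton _).compl, by
    ext x; induction x using WithBot.recBotCoe <;> simp [toE]⟩

lemma measurableSet_entry_ne_bot {d : ℕ} (u v : Fin d) :
    MeasurableSet {M : Matrix (Fin d) (Fin d) MP | M u v ≠ ⊥} :=
  have hentry : Measurable fun M : Matrix (Fin d) (Fin d) MP => M u v :=
    (measurable_pi_apply v).comp (measurable_pi_apply u)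
  hentry measurableSet_ne_bot

lemma measurable_mpSupport {d : ℕ} : Measurable (mpSupport (d := d)) :=
  measurable_pi_lambda _ fun u => measurable_pi_lambda _ fun v =>
    measurable_to_bool (by convert measurableSet_entry_ne_bot u v; ext; simp [mpSupport])

lemma measurable_mpSupport_prodB {d : ℕ} (A : ℕ → Ω → Matrix (Fin d) (Fin d) MP)
    (I : Finset (Fin d)) (n : ℕ) :
    Measurable[sigmaOf A (Set.Iic n)] fun ω => mpSupport (prodB (fun k => A k ω) I n) := by
  induction n with
  | zero => simp only [prodB]; exact measurable_const
  | succ n ih =>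
    simp only [mpSupport_prodB_succ]
    have hA : Measurable[sigmaOf A (Set.Iic (n + 1))] fun ω => mpSupport (A (n + 1) ω) :=
      measurable_mpSupport.comp ((comap_measurable (A (n + 1))).mono
        (comap_le_sigmaOf A Set.self_mem_Iic) le_rfl)
    exact (measurable_of_finite fun S : (Fin d → Fin d → Bool) × (Fin d → Fin d → Bool) =>
      fun u v => decide (∃ k, S.1 u k ∧ k ∈ I ∧ v ∈ I ∧ S.2 k v)).comp
      ((ih.mono (sigmaOf_mono A (Set.Iic_subset_Iic.2 n.le_succ)) le_rfl).prodMk hA)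

end Measurability

theorem measure_forall_notMem_le_pow {Ω ι : Type*} {m0 : MeasurableSpace Ω} {μ : Measure Ω}
    [IsProbabilityMeasure μ] {F G : ℕ → MeasurableSpace Ω} (hF : Monotone F)
    (hFle : ∀ m, F m ≤ m0) (hGF : ∀ m, G m ≤ F (m + 1)) (hindep : ∀ m, Indep (F m) (G m) μ)
    {s : Finset ι} {X : ℕ → Ω → ι} (hXs : ∀ m ω, X m ω ∈ s)
    (hX : ∀ m x, MeasurableSet[F m] {ω | X m ω = x}) {T : ℕ → ι → Set Ω}
    (hT : ∀ m, ∀ x ∈ s, MeasurableSet[G m] (T m x)) {ρ : ℝ≥0∞} (hρ : ∀ m, ∀ x ∈ s, μ (T m x)ᶜ ≤ ρ)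
    (m : ℕ) : μ {ω | ∀ k < m, ω ∉ T k (X k ω)} ≤ ρ ^ m := by
  set C : ℕ → Set Ω := fun m => {ω | ∀ k < m, ω ∉ T k (X k ω)}
  have hC_succ : ∀ m, C (m + 1) = ⋃ x ∈ s, (C m ∩ {ω | X m ω = x}) ∩ (T m x)ᶜ := by
    intro m
    ext ω
    simp only [C, Set.mem_ofPred_eq, Set.mem_iUnion, Set.mem_inter_iff, Set.mem_compl_iff,
      Nat.lt_succ_iff_lt_or_eq, or_imp, forall_and, forall_eq]
    exact ⟨fun h => ⟨X m ω, hXs m ω, ⟨h.1, rfl⟩, h.2⟩, fun ⟨x, _, ⟨h, hx⟩, hT⟩ => ⟨h, hx ▸ hT⟩⟩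
  have hC : ∀ m, MeasurableSet[F m] (C m) := by
    intro m
    induction m with
    | zero => simp [C]
    | succ m ih =>
      rw [hC_succ]
      exact Finset.measurableSet_biUnion _ fun x hx =>
        ((hF m.le_succ _ ih).inter (hF m.le_succ _ (hX m x))).inter (hGF m _ (hT m x hx)).compl
  induction m with
  | zero => simp
  | succ m ih =>
    have hpart : ∀ x, MeasurableSet[F m] (C m ∩ {ω | X m ω = x}) := fun x => (hC m).inter (hX m x)
    calc μ (C (m + 1))
        ≤ ∑ x ∈ s, μ ((C m ∩ {ω | X m ω = x}) ∩ (T m x)ᶜ) := by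
          rw [hC_succ]; exact measure_biUnion_finset_le _ _
      _ = ∑ x ∈ s, μ (C m ∩ {ω | X m ω = x}) * μ (T m x)ᶜ :=
          Finset.sum_congr rfl fun x hx =>
            (Indep_iff _ _ μ).1 (hindep m) _ _ (hpart x) (hT m x hx).compl
      _ ≤ ∑ x ∈ s, μ (C m ∩ {ω | X m ω = x}) * ρ :=
          Finset.sum_le_sum fun x hx => by gcongr; exact hρ m x hx
      _ = μ (⋃ x ∈ s, C m ∩ {ω | X m ω = x}) * ρ := by
          rw [← Finset.sum_mul, measure_biUnion_finset _ fun x _ => hFle m _ (hpart x)]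
          intro x _ y _ hxy
          exact Set.disjoint_left.2 fun ω hx hy => hxy (hx.2.symm.trans hy.2)
      _ ≤ μ (C m) * ρ := by gcongr; exact Set.iUnion₂_subset fun x _ => Set.inter_subset_left
      _ ≤ ρ ^ (m + 1) := by rw [pow_succ]; gcongr

section Routes

variable {d : ℕ} {Ω : Type*} {mΩ : MeasurableSpace Ω} {μ : Measure Ω}
  {A : ℕ → Ω → Matrix (Fin d) (Fin d) MP}

def routeOpen (A : ℕ → Ω → Matrix (Fin d) (Fin d) MP) (N n : ℕ) (f : ℕ → Fin d) : Set Ω :=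
  {ω | ∀ t < n, A (N + t + 1) ω (f t) (f (t + 1)) ≠ ⊥}

lemma measurableSet_routeOpen {N N' n : ℕ} (hn : N + n ≤ N') (f : ℕ → Fin d) :
    MeasurableSet[sigmaOf A (Set.Ioc N N')] (routeOpen A N n f) := by
  simp only [routeOpen, Set.ofPred_forall]
  exact .iInter fun t => .iInter fun ht =>
    comap_le_sigmaOf A (show N + t + 1 ∈ Set.Ioc N N' from ⟨by omega, by omega⟩) _
      ⟨_, measurableSet_entry_ne_bot (f t) (f (t + 1)), rfl⟩

lemma measure_routeOpen (hindep : iIndepFun A μ) (hid : ∀ n, IdentDistrib (A n) (A 1) μ μ)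
    (N n : ℕ) (f : ℕ → Fin d) :
    μ (routeOpen A N n f) = ∏ t ∈ Finset.range n, μ {ω | A 1 ω (f t) (f (t + 1)) ≠ ⊥} := by
  have hinj : Function.Injective fun t => N + t + 1 := fun a b h => by simpa using h
  have hroute : routeOpen A N n f =
      ⋂ t ∈ Finset.range n, A (N + t + 1) ⁻¹' {M | M (f t) (f (t + 1)) ≠ ⊥} := by
    ext ω; simp [routeOpen]
  rw [hroute, (hindep.precomp hinj).measure_inter_preimage_eq_mul _
    fun t _ => measurableSet_entry_ne_bot _ _]
  exact Finset.prod_congr rfl fun t _ => (hid _).measure_mem_eq (measurableSet_entry_ne_bot _ _)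

lemma exists_escape_route {I : Finset (Fin d)}
    (hconn : ∀ a ∈ I, ∀ b ∈ I,
      Relation.ReflTransGen (fun u v => u ∈ I ∧ v ∈ I ∧ 0 < μ {ω | A 1 ω u v ≠ ⊥}) a b)
    (hD : 0 < μ {ω | ∃ a ∈ I, ∃ j ∉ I, A 1 ω a j ≠ ⊥}) (u : Fin d) (hu : u ∈ I) :
    ∃ (n : ℕ) (f : ℕ → Fin d), f 0 = u ∧ f n ∉ I ∧
      ∀ t < n, 0 < μ {ω | A 1 ω (f t) (f (t + 1)) ≠ ⊥} := by
  obtain ⟨a, ha, j, hj, hexit⟩ : ∃ a ∈ I, ∃ j ∉ I, 0 < μ {ω | A 1 ω a j ≠ ⊥} := by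
    by_contra! h
    refine hD.ne' (measure_mono_null (fun ω ⟨a, ha, j, hj, hω⟩ => ?_)
      (measure_biUnion_null_iff I.countable_toSet |>.2 fun a ha =>
        measure_biUnion_null_iff (Iᶜ).countable_toSet |>.2 fun j hj =>
          nonpos_iff_eq_zero.1 (h a ha j (Finset.mem_compl.1 hj))))
    exact Set.mem_biUnion (Finset.mem_coe.2 ha)
      (Set.mem_biUnion (Finset.mem_coe.2 (Finset.mem_compl.2 hj)) hω)
  obtain ⟨n, f, hf0, hfn, hf⟩ :=
    ((Relation.ReflTransGen.mono (fun _ _ (h : _ ∈ I ∧ _ ∈ I ∧ _) => h.2.2) _ _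
      (hconn u hu a ha)).tail hexit).exists_path
  exact ⟨n, f, hf0, hfn ▸ hj, hf⟩

theorem exists_lt_one_measure_forall_notMem_routeOpen_le_pow [IsProbabilityMeasure μ]
    (hmeas : ∀ n, Measurable (A n)) (hindep : iIndepFun A μ)
    (hid : ∀ n, IdentDistrib (A n) (A 1) μ μ) {s : Finset (Fin d)} {n : Fin d → ℕ}
    {f : Fin d → ℕ → Fin d} (hpos : ∀ u ∈ s, ∀ t < n u, 0 < μ {ω | A 1 ω (f u t) (f u (t + 1)) ≠ ⊥})
    {M : ℕ} (hM : ∀ u ∈ s, n u ≤ M) {X : ℕ → Ω → Fin d} (hXs : ∀ m ω, X m ω ∈ s)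
    (hX : ∀ m u, MeasurableSet[sigmaOf A (Set.Iic (m * M))] {ω | X m ω = u}) :
    ∃ ρ < 1, ∀ m, μ {ω | ∀ k < m, ω ∉ routeOpen A (k * M) (n (X k ω)) (f (X k ω))} ≤ ρ ^ m := by
  have hmeas_route : ∀ m, ∀ u ∈ s,
      MeasurableSet[sigmaOf A (Set.Ioc (m * M) ((m + 1) * M))] (routeOpen A (m * M) (n u) (f u)) :=
    fun m u hu => measurableSet_routeOpen (by rw [add_one_mul]; linarith [hM u hu]) _
  refine ⟨s.sup fun u => 1 - μ (routeOpen A 0 (n u) (f u)), ?_, fun m =>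
    measure_forall_notMem_le_pow (fun a b hab => sigmaOf_mono A
      (Set.Iic_subset_Iic.2 (Nat.mul_le_mul_right M hab))) (fun m => sigmaOf_le hmeas _)
      (fun m => sigmaOf_mono A Set.Ioc_subset_Iic_self)
      (fun m => indep_iSup_of_disjoint (fun k => (hmeas k).comap_le) hindep.iIndep
        (Set.Iic_disjoint_Ioc le_rfl)) hXs hX hmeas_route (fun m u hu => ?_) m⟩
  · refine Finset.sup_lt_iff zero_lt_one |>.2 fun u hu =>
      ENNReal.sub_lt_self ENNReal.one_ne_top one_ne_zero ?_
    rw [measure_routeOpen hindep hid]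
    exact Finset.prod_ne_zero_iff.2 fun t ht => (hpos u hu t (Finset.mem_range.1 ht)).ne'
  · rw [prob_compl_eq_one_sub (sigmaOf_le hmeas _ _ (hmeas_route m u hu)),
      measure_routeOpen hindep hid, ← measure_routeOpen hindep hid 0]
    exact Finset.le_sup (f := fun u => 1 - μ (routeOpen A 0 (n u) (f u))) hu

end Routes

section Pick

variable {α : Type*} {s : Finset α} {r : α → Bool} {a : α}

def pickOr (s : Finset α) (r : α → Bool) (a : α) : α :=
  if h : ∃ u ∈ s, r u then h.choose else a

lemma pickOr_mem (ha : a ∈ s) : pickOr s r a ∈ s := by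
  unfold pickOr
  split_ifs with h
  exacts [h.choose_spec.1, ha]

lemma pickOr_spec (h : ∃ u ∈ s, r u) : r (pickOr s r a) := by
  simpa [pickOr, h] using h.choose_spec.2

end Pick

theorem stmt11_general {d : ℕ} {Ω : Type*} [MeasurableSpace Ω] (μ : Measure Ω)
    [IsProbabilityMeasure μ]
    (A : ℕ → Ω → Matrix (Fin d) (Fin d) MP)
    (hmeas : ∀ n, Measurable (A n))
    (hindep : ProbabilityTheory.iIndepFun A μ)
    (hid : ∀ n, ProbabilityTheory.IdentDistrib (A n) (A 1) μ μ)
    (hline : ∀ n, ∀ᵐ ω ∂μ, noBotLine (A n ω))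
    (I : Finset (Fin d))
    (hconn : ∀ a ∈ I, ∀ b ∈ I,
      Relation.ReflTransGen (fun u v => u ∈ I ∧ v ∈ I ∧ 0 < μ {ω | A 1 ω u v ≠ ⊥}) a b)
    (hD : 0 < μ {ω | ∃ a ∈ I, ∃ j ∉ I, A 1 ω a j ≠ ⊥}) :
    ∀ i ∈ I,
      μ {ω | ∀ n : ℕ, ∀ j ∉ I,
        mpMul (prodB (fun k => A k ω) I n) (A (n + 1) ω) i j = ⊥} = 0 := by
  intro i hi
  choose! n f hf0 hfn hpos using exists_escape_route hconn hD
  set M := I.sup n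
  set X : ℕ → Ω → Fin d := fun m ω => pickOr I (mpSupport (prodB (fun k => A k ω) I (m * M)) i) i
  have hXI : ∀ m ω, X m ω ∈ I := fun m ω => pickOr_mem hi
  have hX : ∀ m u, MeasurableSet[sigmaOf A (Set.Iic (m * M))] {ω | X m ω = u} := fun m u =>
    (measurable_of_finite (fun S : Fin d → Fin d → Bool => pickOr I (S i) i)).comp
      (measurable_mpSupport_prodB A I (m * M)) (measurableSet_singleton u)
  obtain ⟨ρ, hρ, hbound⟩ := exists_lt_one_measure_forall_notMem_routeOpen_le_pow hmeas hindep hid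
    hpos (fun u hu => Finset.le_sup hu) hXI hX
  refine le_antisymm (ge_of_tendsto' (ENNReal.tendsto_pow_atTop_nhds_zero_of_lt_one hρ)
    fun m => (measure_mono_ae ?_).trans (hbound m)) zero_le
  filter_upwards [ae_all_iff.2 hline] with ω hω hE k _ hopen
  have hsurv : prodB (fun k => A k ω) I (k * M) i (X k ω) ≠ ⊥ := by
    obtain ⟨u, hu, hiu⟩ := exists_prodB_ne_bot hi hω hE (k * M)
    simpa [mpSupport] using pickOr_spec (r := mpSupport (prodB (fun k => A k ω) I (k * M)) i)
      (a := i) ⟨u, hu, by simpa [mpSupport] using hiu⟩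
  obtain ⟨N, j, hj, hescape⟩ := exists_mpMul_prodB_ne_bot_of_path (B := fun k => A k ω)
    (hXI k ω) hsurv (hf0 _ (hXI k ω)) (hfn _ (hXI k ω)) hopen
  exact hescape (hE N j hj)

/-- for an i.i.d. sequence of random max-plus matrices with no line of
`-∞`, block-triangular with respect to a partition `(I, J = Iᶜ)`, with the incidence
graph of the `I×I` block `B` strongly connected and the `I×J` block `D` not a.s.
identically `-∞`, the event `{∀ n, (B(1)⋯B(n)D(n+1)·0)_i = -∞}` is negligible for
every `i ∈ I`. -/
theorem stmt11 {d : ℕ} {Ω : Type*} [MeasurableSpace Ω] (μ : Measure Ω)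
    [IsProbabilityMeasure μ]
    (A : ℕ → Ω → Matrix (Fin d) (Fin d) MP)
    (hmeas : ∀ n, Measurable (A n))
    (hindep : ProbabilityTheory.iIndepFun A μ)
    (hid : ∀ n, ProbabilityTheory.IdentDistrib (A n) (A 1) μ μ)
    (hline : ∀ n, ∀ᵐ ω ∂μ, noBotLine (A n ω))
    (I : Finset (Fin d))
    (hblock : ∀ n, ∀ᵐ ω ∂μ, ∀ i ∉ I, ∀ j ∈ I, A n ω i j = ⊥)
    (hconn : ∀ a ∈ I, ∀ b ∈ I,
      Relation.ReflTransGen (fun u v => u ∈ I ∧ v ∈ I ∧ 0 < μ {ω | A 1 ω u v ≠ ⊥}) a b)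
    (hD : 0 < μ {ω | ∃ a ∈ I, ∃ j ∉ I, A 1 ω a j ≠ ⊥}) :
    ∀ i ∈ I,
      μ {ω | ∀ n : ℕ, ∀ j ∉ I,
        mpMul (prodB (fun k => A k ω) I n) (A (n + 1) ω) i j = ⊥} = 0 :=
  stmt11_general μ A hmeas hindep hid hline I hconn hD
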